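/- There are infinitely many positive integers n such that N_prod(n, 2, n−2, 1) > N̂_prod(n, 2, n−2, 1). -/

import Mathlib

open Finset

/-- The ground set `[n] = {1,…,n}`. -/
def gs (n : ℕ) : Finset ℕ := Finset.Icc 1 n

/-- `F` is an `m`-uniform family of subsets of `[n]`. -/
def UniformOn (n m : ℕ) (F : Finset (Finset ℕ)) : Prop :=
  ∀ A ∈ F, A ⊆ gs n ∧ A.card = m

/-- `F` and `G` are cross-`t`-intersecting. -/
def CrossInt (t : ℕ) (F G : Finset (Finset ℕ)) : Prop :=
  ∀ A ∈ F, ∀ B ∈ G, t ≤ (A ∩ B).card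

/-- The maximum of `|F| ⬝ |G|` over cross-`t`-intersecting pairs where `F` is an
`a`-uniform family and `G` a `b`-uniform family of subsets of `[n]`. -/
noncomputable def NProd (n a b t : ℕ) : ℕ :=
  sSup {x : ℕ | ∃ F G : Finset (Finset ℕ),
    UniformOn n a F ∧ UniformOn n b G ∧ CrossInt t F G ∧ x = F.card * G.card}

/-- The family `{A ∈ C([n],m) : |A ∩ [s]| ≥ u}` appearing in a Hirschorn pair. -/
def HirschF (n m s u : ℕ) : Finset (Finset ℕ) :=
  ((gs n).powersetCard m).filter (fun A => u ≤ (A ∩ gs s).card)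

/-- The maximum of `|F| ⬝ |G|` over all Hirschorn pairs `(F, G)` with parameters
`u, v, s ∈ [n]`, `u + v = s + t`. -/
noncomputable def NHatProd (n a b t : ℕ) : ℕ :=
  sSup {x : ℕ | ∃ u ∈ gs n, ∃ v ∈ gs n, ∃ s ∈ gs n, u + v = s + t ∧
    x = (HirschF n a s u).card * (HirschF n b s v).card}

/-!
If `C(n,2) = 2T`, splitting the 2-subsets of `[n]` into two halves and pairing one half with
the complements of the other gives a cross-intersecting pair with product `T²`. Conversely,
taking complements embeds the `(n-2)`-family of a cross-intersecting pair `(F, G)` into the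
2-sets outside `F`, so `|F| + |G| ≤ 2T` and `|F| ⬝ |G| < T²` unless `|F| = T`. The 2-uniform
family of a Hirschorn pair has `0`, `C(s,2)` or `C(n,2) - C(n-s,2)` members, so `|F| = T`
forces `T = C(j,2)` for some `j`. For `n = 12k + 5` this is impossible, since `T ≡ 2 (mod 3)`
and `C(j,2)` is never `2 mod 3`.
-/

lemma card_gs (n : ℕ) : (gs n).card = n := by simp [gs]

lemma gs_mono {s n : ℕ} (h : s ≤ n) : gs s ⊆ gs n := Icc_subset_Icc_right h

lemma uniformOn_iff_subset_powersetCard {n m : ℕ} {F : Finset (Finset ℕ)} :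
    UniformOn n m F ↔ F ⊆ (gs n).powersetCard m := by
  simp only [UniformOn, subset_iff, mem_powersetCard]

lemma UniformOn.card_le {n m : ℕ} {F : Finset (Finset ℕ)} (hF : UniformOn n m F) :
    F.card ≤ n.choose m := by
  simpa [card_gs] using card_le_card (uniformOn_iff_subset_powersetCard.1 hF)

lemma mul_card_le_NProd {n a b t : ℕ} {F G : Finset (Finset ℕ)} (hF : UniformOn n a F)
    (hG : UniformOn n b G) (hFG : CrossInt t F G) : F.card * G.card ≤ NProd n a b t := by
  refine le_csSup ⟨n.choose a * n.choose b, ?_⟩ ⟨F, G, hF, hG, hFG, rfl⟩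
  rintro _ ⟨F', G', hF', hG', -, rfl⟩
  exact Nat.mul_le_mul hF'.card_le hG'.card_le

section Complement

variable {S A B : Finset ℕ}

lemma injOn_sdiff_left (S : Finset ℕ) : {B : Finset ℕ | B ⊆ S}.InjOn (S \ ·) :=
  fun B hB C hC h => by
    rw [← Finset.sdiff_sdiff_eq_self hB, ← Finset.sdiff_sdiff_eq_self hC]
    exact congrArg (S \ ·) h

lemma sdiff_mem_powersetCard {m : ℕ} (hB : B ∈ S.powersetCard m) :
    S \ B ∈ S.powersetCard (S.card - m) := by
  rw [mem_powersetCard] at hB ⊢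
  exact ⟨sdiff_subset, by rw [card_sdiff_of_subset hB.1, hB.2]⟩

lemma inter_sdiff_nonempty_iff (hA : A ⊆ S) : (A ∩ (S \ B)).Nonempty ↔ ¬A ⊆ B := by
  simp only [Finset.Nonempty, mem_inter, mem_sdiff, not_subset]
  exact ⟨fun ⟨x, hxA, _, hxB⟩ => ⟨x, hxA, hxB⟩,
    fun ⟨x, hxA, hxB⟩ => ⟨x, hxA, hA hxA, hxB⟩⟩

end Complement

lemma card_add_card_le_choose_of_crossInt {n a : ℕ} (ha : a ≤ n) {F G : Finset (Finset ℕ)}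
    (hF : UniformOn n a F) (hG : UniformOn n (n - a) G) (hFG : CrossInt 1 F G) :
    F.card + G.card ≤ n.choose a := by
  have hGsub : G.image (gs n \ ·) ⊆ (gs n).powersetCard a := by
    simp only [subset_iff, mem_image]
    rintro _ ⟨B, hB, rfl⟩
    simpa [card_gs, Nat.sub_sub_self ha] using
      sdiff_mem_powersetCard (uniformOn_iff_subset_powersetCard.1 hG hB)
  have hdisj : Disjoint F (G.image (gs n \ ·)) := by
    simp only [disjoint_left, mem_image, not_exists, not_and]
    rintro A hA B hB rfl
    simpa using one_le_card.1 (hFG _ hA B hB)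
  have hGcard : (G.image (gs n \ ·)).card = G.card :=
    card_image_of_injOn fun B hB C hC => injOn_sdiff_left (gs n) (hG B hB).1 (hG C hC).1
  calc F.card + G.card = (F ∪ G.image (gs n \ ·)).card := by
        rw [card_union_of_disjoint hdisj, hGcard]
    _ ≤ ((gs n).powersetCard a).card :=
      card_le_card (union_subset (uniformOn_iff_subset_powersetCard.1 hF) hGsub)
    _ = n.choose a := by rw [card_powersetCard, card_gs]

lemma mul_choose_sub_le_NProd {n a : ℕ} {F : Finset (Finset ℕ)}
    (hF : F ⊆ (gs n).powersetCard a) :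
    F.card * (n.choose a - F.card) ≤ NProd n a (n - a) 1 := by
  set G := ((gs n).powersetCard a \ F).image (gs n \ ·)
  have hG : UniformOn n (n - a) G := by
    rw [uniformOn_iff_subset_powersetCard]
    simp only [G, subset_iff, mem_image]
    rintro _ ⟨B, hB, rfl⟩
    simpa [card_gs] using sdiff_mem_powersetCard (mem_sdiff.1 hB).1
  have hFG : CrossInt 1 F G := by
    simp only [CrossInt, G, mem_image]
    rintro A hA _ ⟨B, hB, rfl⟩
    obtain ⟨hBP, hBF⟩ := mem_sdiff.1 hB
    have hA' := mem_powersetCard.1 (hF hA)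
    have hB' := mem_powersetCard.1 hBP
    refine one_le_card.2 ((inter_sdiff_nonempty_iff hA'.1).2 fun hAB => hBF ?_)
    rwa [← eq_of_subset_of_card_le hAB (hB'.2.trans hA'.2.symm).le]
  have hGcard : G.card = n.choose a - F.card := by
    rw [card_image_of_injOn fun B hB C hC => injOn_sdiff_left (gs n)
        (mem_powersetCard.1 (mem_sdiff.1 hB).1).1 (mem_powersetCard.1 (mem_sdiff.1 hC).1).1,
      card_sdiff_of_subset hF, card_powersetCard, card_gs]
  simpa [hGcard] using mul_card_le_NProd (uniformOn_iff_subset_powersetCard.2 hF) hG hFG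

lemma HirschF_uniformOn (n m s u : ℕ) : UniformOn n m (HirschF n m s u) :=
  uniformOn_iff_subset_powersetCard.2 (filter_subset _ _)

/-- Two sets meeting `[s]` in at least `u` and `v` points share at least `u + v - s` of them. -/
lemma HirschF_crossInt {n a b s u v t : ℕ} (huv : u + v = s + t) :
    CrossInt t (HirschF n a s u) (HirschF n b s v) := by
  intro A hA B hB
  have hu := (mem_filter.1 hA).2
  have hv := (mem_filter.1 hB).2
  have hunion : (A ∩ gs s ∪ B ∩ gs s).card ≤ s :=
    (card_le_card (union_subset inter_subset_right inter_subset_right)).trans (card_gs s).le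
  have hinter : (A ∩ gs s ∩ (B ∩ gs s)).card ≤ (A ∩ B).card :=
    card_le_card fun x hx => by simp only [mem_inter] at hx ⊢; exact ⟨hx.1.1, hx.2.1⟩
  have := card_union_add_card_inter (A ∩ gs s) (B ∩ gs s)
  omega

lemma HirschF_eq_empty {n m s u : ℕ} (hmu : m < u) : HirschF n m s u = ∅ := by
  refine filter_false_of_mem fun A hA => ?_
  have := card_le_card (inter_subset_left (s₁ := A) (s₂ := gs s))
  rw [(mem_powersetCard.1 hA).2] at this
  omega

lemma HirschF_self {n m s : ℕ} (hs : s ≤ n) : HirschF n m s m = (gs s).powersetCard m := by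
  ext A
  simp only [HirschF, mem_filter, mem_powersetCard]
  constructor
  · rintro ⟨⟨-, hAm⟩, hm⟩
    exact ⟨inter_eq_left.1 (eq_of_subset_of_card_le inter_subset_left (hAm ▸ hm)), hAm⟩
  · rintro ⟨hA, hAm⟩
    exact ⟨⟨hA.trans (gs_mono hs), hAm⟩, by rw [inter_eq_left.2 hA, hAm]⟩

lemma card_HirschF_one_add {n m s : ℕ} (hs : s ≤ n) :
    (HirschF n m s 1).card + (n - s).choose m = n.choose m := by
  have hmiss : ((gs n).powersetCard m).filter (fun A => ¬1 ≤ (A ∩ gs s).card) =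
      (gs n \ gs s).powersetCard m := by
    ext A
    simp only [mem_filter, mem_powersetCard, one_le_card, not_nonempty_iff_eq_empty,
      subset_sdiff, disjoint_iff_inter_eq_empty]
    tauto
  have htotal := card_filter_add_card_filter_not (s := (gs n).powersetCard m)
    (fun A => 1 ≤ (A ∩ gs s).card)
  rwa [hmiss, card_powersetCard, card_powersetCard, card_sdiff_of_subset (gs_mono hs),
    card_gs, card_gs] at htotal

lemma card_HirschF_two_ne {n s u T : ℕ} (hs : s ≤ n) (hu : 1 ≤ u) (hn : n.choose 2 = 2 * T)
    (hT : ∀ j : ℕ, j.choose 2 ≠ T) : (HirschF n 2 s u).card ≠ T := by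
  obtain rfl | rfl | hu := show u = 1 ∨ u = 2 ∨ 2 < u by omega
  · have := card_HirschF_one_add (m := 2) hs
    exact fun h => hT (n - s) (by omega)
  · rw [HirschF_self hs, card_powersetCard, card_gs]
    exact hT s
  · rw [HirschF_eq_empty hu, card_empty]
    exact hT 0

lemma mul_lt_mul_self_of_add_le_of_ne {f g T : ℕ} (h : f + g ≤ 2 * T) (hf : f ≠ T) :
    f * g < T * T := by
  have hsq : (0 : ℤ) < ((f : ℤ) - T) ^ 2 := by
    have : (f : ℤ) ≠ T := by exact_mod_cast hf
    positivity
  zify at h ⊢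
  nlinarith

lemma NHatProd_two_lt {n T : ℕ} (hn : n.choose 2 = 2 * T) (hT : ∀ j : ℕ, j.choose 2 ≠ T) :
    NHatProd n 2 (n - 2) 1 < T * T := by
  have hT0 : T ≠ 0 := (hT 0).symm
  have h2n : 2 ≤ n := by
    by_contra h
    exact hT0 (by simpa [Nat.choose_eq_zero_of_lt (not_le.1 h)] using hn.symm)
  refine (csSup_le' ?_).trans_lt (Nat.sub_one_lt (by positivity))
  rintro _ ⟨u, hu, v, -, s, hs, huv, rfl⟩
  simp only [gs, mem_Icc] at hu hs
  refine Nat.le_sub_one_of_lt (mul_lt_mul_self_of_add_le_of_ne ?_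
    (card_HirschF_two_ne hs.2 hu.1 hn hT))
  exact hn ▸ card_add_card_le_choose_of_crossInt h2n (HirschF_uniformOn n 2 s u)
    (HirschF_uniformOn n (n - 2) s v) (HirschF_crossInt huv)

lemma mul_self_le_NProd {n a T : ℕ} (hn : n.choose a = 2 * T) :
    T * T ≤ NProd n a (n - a) 1 := by
  obtain ⟨F, hF, hFcard⟩ := exists_subset_card_eq (s := (gs n).powersetCard a) (n := T)
    (by rw [card_powersetCard, card_gs]; omega)
  simpa [hFcard, hn, two_mul] using mul_choose_sub_le_NProd hF

lemma choose_two_mod_three_ne_two (j : ℕ) : j.choose 2 % 3 ≠ 2 := by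
  have hj : 2 * j.choose 2 = j * (j - 1) := by
    rw [Nat.choose_two_right]
    exact Nat.mul_div_cancel' (Nat.even_mul_pred_self j).two_dvd
  intro h
  have : j * (j - 1) % 3 = 1 := by omega
  rw [Nat.mul_mod] at this
  obtain hr | hr | ⟨hr, hr'⟩ :
      j % 3 = 0 ∨ (j - 1) % 3 = 0 ∨ j % 3 = 2 ∧ (j - 1) % 3 = 1 := by omega
  · simp [hr] at this
  · simp [hr] at this
  · simp [hr, hr'] at this

/-- Proposition: infinitely many counterexamples. -/
theorem infinitely_many_counterexamples :
    {n : ℕ | 0 < n ∧ NHatProd n 2 (n - 2) 1 < NProd n 2 (n - 2) 1}.Infinite := by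
  refine Set.infinite_of_injective_forall_mem (f := fun k => 12 * k + 5)
    (fun a b h => by simpa using h) fun k => ⟨by omega, ?_⟩
  have hn : (12 * k + 5).choose 2 = 2 * (3 * (12 * k ^ 2 + 9 * k + 1) + 2) := by
    rw [Nat.choose_two_right, Nat.add_sub_assoc (by norm_num),
      show (12 * k + 5) * (12 * k + 4) = 2 * (2 * (3 * (12 * k ^ 2 + 9 * k + 1) + 2)) by ring,
      Nat.mul_div_cancel_left _ two_pos]
  refine (NHatProd_two_lt hn fun j hj => choose_two_mod_three_ne_two j ?_).trans_le
    (mul_self_le_NProd hn)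
  omega
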